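/- Let n be a positive integer with n ≡ 0 (mod 4). Then the limit A_n = lim_{k→∞} ∫₀^π |cosⁿ x − cosⁿ(kx)| dx (k ranging over the positive integers) exists and equals (16/(2ⁿ·π)) · Σ_{j=0}^{(n−4)/4} C(n,2j+1)/(n/2 − (2j+1))², where C(n,m) denotes the binomial coefficient. -/

import Mathlib

/-!
Cutting `[0, π]` at the points `jπ/k` and substituting `t = kx - jπ` on each piece turns the
integral into a Riemann sum, of mesh `π/k`, for `G x = ∫₀^π |cosⁿ x - cosⁿ t| dt`; this only uses
that `cosⁿ` is Lipschitz and, `n` being even, `π`-periodic. So the limit is `π⁻¹ ∫₀^π G`.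
Since `cosⁿ` is symmetric about `π/2` and decreasing on `[0, π/2]`, this double integral equals
`8 ∫₀^{π/2} (π/2 - 2x) cosⁿ x dx`, which the expansion `cosⁿ x = 2⁻ⁿ ∑ C(n,m) cos ((n - 2m) x)`
evaluates termwise: for `4 ∣ n` only odd `m` contribute, each `1 / (n/2 - m)²`, and the terms
`m` and `n - m` agree.
-/

open Real Filter MeasureTheory Topology Finset Function intervalIntegral
open scoped NNReal

theorem LipschitzWith.abs_sub_mul_sub_integral_le {g : ℝ → ℝ} {L : ℝ≥0}
    (hg : LipschitzWith L g) {a b : ℝ} (hab : a ≤ b) :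
    |(b - a) * g a - ∫ x in a..b, g x| ≤ L * (b - a) ^ 2 := by
  have hbound : ∀ x ∈ Set.uIoc a b, ‖g a - g x‖ ≤ L * (b - a) := fun x hx => by
    rw [Set.uIoc_of_le hab] at hx
    calc ‖g a - g x‖ = dist (g a) (g x) := rfl
      _ ≤ L * dist a x := hg.dist_le_mul a x
      _ ≤ L * (b - a) := by
        rw [Real.dist_eq, abs_of_nonpos (by linarith [hx.1])]
        gcongr; linarith [hx.2]
  have := norm_integral_le_of_norm_le_const hbound
  rwa [integral_sub intervalIntegrable_const (hg.continuous.intervalIntegrable _ _),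
    intervalIntegral.integral_const, smul_eq_mul, Real.norm_eq_abs,
    abs_of_nonneg (sub_nonneg.2 hab), mul_assoc, ← sq] at this

theorem LipschitzWith.abs_mul_sum_sub_integral_le {g : ℝ → ℝ} {L : ℝ≥0}
    (hg : LipschitzWith L g) {T : ℝ} (hT : 0 ≤ T) {k : ℕ} (hk : 0 < k) :
    |T / k * ∑ j ∈ range k, g (j * T / k) - ∫ x in 0..T, g x| ≤ L * T ^ 2 / k := by
  have hk' : (0 : ℝ) < k := by exact_mod_cast hk
  set a : ℕ → ℝ := fun j => j * T / k
  have ha_succ (j : ℕ) : a (j + 1) - a j = T / k := by simp only [a]; push_cast; ring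
  have hsplit : ∫ x in 0..T, g x = ∑ j ∈ range k, ∫ x in a j..a (j + 1), g x := by
    rw [sum_integral_adjacent_intervals fun j _ => hg.continuous.intervalIntegrable _ _]
    simp only [a, Nat.cast_zero, zero_mul, zero_div, mul_div_cancel_left₀ T hk'.ne']
  calc |T / k * ∑ j ∈ range k, g (a j) - ∫ x in 0..T, g x|
      = |∑ j ∈ range k, ((a (j + 1) - a j) * g (a j) - ∫ x in a j..a (j + 1), g x)| := by
        simp only [ha_succ, sum_sub_distrib, mul_sum, hsplit]
    _ ≤ ∑ j ∈ range k, L * (T / k) ^ 2 := by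
        refine (abs_sum_le_sum_abs _ _).trans (sum_le_sum fun j _ => ?_)
        rw [← ha_succ j]
        exact hg.abs_sub_mul_sub_integral_le
          (sub_nonneg.1 ((ha_succ j).symm ▸ div_nonneg hT hk'.le))
    _ = L * T ^ 2 / k := by
        rw [sum_const, card_range, nsmul_eq_mul]
        field_simp

theorem integral_comp_mul_eq_sum_integral {φ : ℝ → ℝ → ℝ} (hφ : Continuous φ.uncurry) {T : ℝ}
    (hper : ∀ x, Periodic (φ x) T) {k : ℕ} (hk : 0 < k) :
    ∫ x in 0..T, φ x (k * x) = (k : ℝ)⁻¹ * ∑ j ∈ range k, ∫ t in 0..T, φ ((t + j * T) / k) t := by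
  have hk' : (k : ℝ) ≠ 0 := by positivity
  set g : ℝ → ℝ := fun u => φ (u / k) u
  have hg : Continuous g := hφ.comp₂ (continuous_id.div_const _) continuous_id
  have hpiece (j : ℕ) :
      ∫ u in j * T..(j + 1 : ℕ) * T, g u = ∫ t in 0..T, φ ((t + j * T) / k) t := by
    have hshift := integral_comp_add_right g (j * T) (a := 0) (b := T)
    rw [zero_add] at hshift
    rw [show ((j + 1 : ℕ) : ℝ) * T = T + j * T by push_cast; ring, ← hshift]
    exact integral_congr fun t _ => by simp only [g, (hper _).nat_mul j t]
  have hsum := sum_integral_adjacent_intervals (a := fun j : ℕ => (j : ℝ) * T) (n := k)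
    fun j _ => hg.intervalIntegrable (μ := volume) _ _
  simp only [hpiece, Nat.cast_zero, zero_mul] at hsum
  calc ∫ x in 0..T, φ x (k * x) = ∫ x in 0..T, g (k * x) := by
        refine integral_congr fun x _ => ?_
        simp only [g, mul_div_cancel_left₀ x hk']
    _ = (k : ℝ)⁻¹ * ∫ u in 0..k * T, g u := by
        rw [integral_comp_mul_left g hk', smul_eq_mul, mul_zero]
    _ = _ := by rw [hsum]

section PeriodicLipschitz

variable {f : ℝ → ℝ} {K : ℝ≥0} {T : ℝ}

theorem LipschitzWith.abs_sub_abs_sub_le (hf : LipschitzWith K f) (x y t : ℝ) :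
    |(|f x - f t| - |f y - f t|)| ≤ K * |x - y| := by
  calc |(|f x - f t| - |f y - f t|)| ≤ |f x - f t - (f y - f t)| :=
        abs_abs_sub_abs_le_abs_sub _ _
    _ = dist (f x) (f y) := by rw [sub_sub_sub_cancel_right, Real.dist_eq]
    _ ≤ K * |x - y| := hf.dist_le_mul x y

theorem LipschitzWith.abs_integral_abs_sub_comp_sub_le (hf : LipschitzWith K f) (hT : 0 ≤ T)
    {u : ℝ → ℝ} (hu : Continuous u) {y δ : ℝ} (hδ : ∀ t ∈ Set.Ioc 0 T, |u t - y| ≤ δ) :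
    |(∫ t in 0..T, |f (u t) - f t|) - (∫ t in 0..T, |f y - f t|)| ≤ K * δ * T := by
  have hint (v : ℝ → ℝ) (hv : Continuous v) :
      IntervalIntegrable (fun t => |f (v t) - f t|) volume 0 T :=
    ((hf.continuous.comp hv).sub hf.continuous).abs.intervalIntegrable _ _
  have hbound : ∀ t ∈ Set.uIoc 0 T, ‖|f (u t) - f t| - |f y - f t|‖ ≤ K * δ := fun t ht =>
    (Real.norm_eq_abs _).trans_le <| (hf.abs_sub_abs_sub_le _ _ t).trans <| by
      gcongr
      exact hδ t (Set.uIoc_of_le hT ▸ ht)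
  have := norm_integral_le_of_norm_le_const hbound
  rwa [integral_sub (hint u hu) (hint _ continuous_const), Real.norm_eq_abs, sub_zero,
    abs_of_nonneg hT] at this

theorem LipschitzWith.integral_abs_sub (hf : LipschitzWith K f) (hT : 0 ≤ T) :
    LipschitzWith (K * T.toNNReal) fun x => ∫ t in 0..T, |f x - f t| := by
  refine LipschitzWith.of_dist_le_mul fun x y => ?_
  rw [Real.dist_eq, Real.dist_eq, NNReal.coe_mul, Real.coe_toNNReal _ hT, mul_right_comm]
  exact hf.abs_integral_abs_sub_comp_sub_le hT continuous_const fun _ _ => le_rfl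

theorem LipschitzWith.abs_integral_abs_sub_comp_mul_sub_le (hf : LipschitzWith K f)
    (hper : Periodic f T) (hT : 0 < T) {k : ℕ} (hk : 0 < k) :
    |(∫ x in 0..T, |f x - f (k * x)|) - T⁻¹ * (∫ x in 0..T, ∫ t in 0..T, |f x - f t|)|
      ≤ 2 * K * T ^ 2 / k := by
  have hk' : (0 : ℝ) < k := by exact_mod_cast hk
  set G : ℝ → ℝ := fun x => ∫ t in 0..T, |f x - f t|
  have hpiece (j : ℕ) :
      |(∫ t in 0..T, |f ((t + j * T) / k) - f t|) - G (j * T / k)| ≤ K * T ^ 2 / k := by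
    have := hf.abs_integral_abs_sub_comp_sub_le hT.le (u := fun t => (t + j * T) / k)
      (by fun_prop) (y := j * T / k) (δ := T / k) fun t ht => by
        rw [← sub_div, add_sub_cancel_right, abs_div, abs_of_pos ht.1, abs_of_pos hk']
        gcongr
        exact ht.2
    calc _ ≤ K * (T / k) * T := this
      _ = K * T ^ 2 / k := by ring
  have hsum : |(k : ℝ)⁻¹ * (∑ j ∈ range k, ∫ t in 0..T, |f ((t + j * T) / k) - f t|)
      - (k : ℝ)⁻¹ * ∑ j ∈ range k, G (j * T / k)| ≤ K * T ^ 2 / k := by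
    rw [← mul_sub, ← sum_sub_distrib, abs_mul, abs_inv, abs_of_pos hk']
    calc (k : ℝ)⁻¹ * |∑ j ∈ range k, ((∫ t in 0..T, |f ((t + j * T) / k) - f t|) - G (j * T / k))|
        ≤ (k : ℝ)⁻¹ * ∑ j ∈ range k, K * T ^ 2 / k := by
          gcongr
          exact (abs_sum_le_sum_abs _ _).trans (sum_le_sum fun j _ => hpiece j)
      _ = K * T ^ 2 / k := by rw [sum_const, card_range, nsmul_eq_mul]; field_simp
  have hriemann : |(k : ℝ)⁻¹ * ∑ j ∈ range k, G (j * T / k) - T⁻¹ * ∫ x in 0..T, G x|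
      ≤ K * T ^ 2 / k := by
    have := (hf.integral_abs_sub hT.le).abs_mul_sum_sub_integral_le hT.le hk
    rw [NNReal.coe_mul, Real.coe_toNNReal _ hT.le] at this
    calc _ = T⁻¹ * |T / k * ∑ j ∈ range k, G (j * T / k) - ∫ x in 0..T, G x| := by
          generalize ∑ j ∈ range k, G (j * T / k) = S
          rw [← abs_of_pos (inv_pos.2 hT), ← abs_mul, abs_of_pos (inv_pos.2 hT)]
          field_simp
      _ ≤ T⁻¹ * (K * T * T ^ 2 / k) := by gcongr
      _ = K * T ^ 2 / k := by field_simp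
  have hfc := hf.continuous
  rw [integral_comp_mul_eq_sum_integral (φ := fun x s => |f x - f s|)
    (by fun_prop) (fun x s => by simp only [hper s]) hk]
  calc _ ≤ K * T ^ 2 / k + K * T ^ 2 / k := (abs_sub_le _ _ _).trans (add_le_add hsum hriemann)
    _ = 2 * K * T ^ 2 / k := by ring

theorem LipschitzWith.tendsto_integral_abs_sub_comp_mul (hf : LipschitzWith K f)
    (hper : Periodic f T) (hT : 0 < T) :
    Tendsto (fun k : ℕ => ∫ x in 0..T, |f x - f (k * x)|) atTop
      (𝓝 (T⁻¹ * ∫ x in 0..T, ∫ t in 0..T, |f x - f t|)) := by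
  refine tendsto_iff_norm_sub_tendsto_zero.2 <|
    squeeze_zero_norm' ?_ (tendsto_const_div_atTop_nhds_zero_nat (2 * K * T ^ 2))
  filter_upwards [eventually_gt_atTop 0] with k hk
  rw [norm_norm]
  exact hf.abs_integral_abs_sub_comp_mul_sub_le hper hT hk

end PeriodicLipschitz

theorem integral_zero_two_mul_eq_two_mul_of_symm {h : ℝ → ℝ} {a : ℝ}
    (hint : IntervalIntegrable h volume 0 a) (hsymm : ∀ x, h (2 * a - x) = h x) :
    ∫ x in 0..2 * a, h x = 2 * ∫ x in 0..a, h x := by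
  have hreflect : ∫ x in a..2 * a, h x = ∫ x in 0..a, h x := by
    have := integral_comp_sub_left h (2 * a) (a := a) (b := 2 * a)
    rw [sub_self, show 2 * a - a = a by ring] at this
    rw [← this]
    exact integral_congr fun x _ => (hsymm x).symm
  have hint' : IntervalIntegrable h volume a (2 * a) := by
    have := hint.comp_sub_left (2 * a)
    simp only [sub_zero, show 2 * a - a = a by ring, hsymm] at this
    exact this.symm
  rw [← integral_add_adjacent_intervals hint hint', hreflect, two_mul]

section Antitone

variable {f : ℝ → ℝ} {a : ℝ}

theorem integral_abs_sub_of_antitoneOn (hf : Continuous f) (hanti : AntitoneOn f (Set.Icc 0 a))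
    {x : ℝ} (hx : x ∈ Set.Icc 0 a) :
    ∫ t in 0..a, |f x - f t| = (a - 2 * x) * f x + 2 * (∫ t in 0..x, f t) - ∫ t in 0..a, f t := by
  have hint (b c : ℝ) : IntervalIntegrable f volume b c := hf.intervalIntegrable b c
  have hleft : ∫ t in 0..x, |f x - f t| = ∫ t in 0..x, (f t - f x) := by
    refine integral_congr fun t ht => ?_
    rw [Set.uIcc_of_le hx.1] at ht
    rw [abs_sub_comm, abs_of_nonneg (sub_nonneg.2 (hanti ⟨ht.1, ht.2.trans hx.2⟩ hx ht.2))]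
  have hright : ∫ t in x..a, |f x - f t| = ∫ t in x..a, (f x - f t) := by
    refine integral_congr fun t ht => ?_
    rw [Set.uIcc_of_le hx.2] at ht
    rw [abs_of_nonneg (sub_nonneg.2 (hanti hx ⟨hx.1.trans ht.1, ht.2⟩ ht.1))]
  have hint_abs (b c : ℝ) : IntervalIntegrable (fun t => |f x - f t|) volume b c :=
    (by fun_prop : Continuous fun t => |f x - f t|).intervalIntegrable b c
  rw [← integral_add_adjacent_intervals (hint_abs 0 x) (hint_abs x a),
    hleft, hright, integral_sub (hint _ _) intervalIntegrable_const,
    integral_sub intervalIntegrable_const (hint _ _), intervalIntegral.integral_const,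
    intervalIntegral.integral_const, ← integral_add_adjacent_intervals (hint 0 x) (hint x a),
    smul_eq_mul, smul_eq_mul]
  ring

theorem integral_integral_eq_mul_sub_integral_mul (hf : Continuous f) (a : ℝ) :
    ∫ x in 0..a, ∫ t in 0..x, f t = a * (∫ t in 0..a, f t) - ∫ x in 0..a, x * f x := by
  have hprim (x : ℝ) : HasDerivAt (fun u => ∫ t in 0..u, f t) (f x) x :=
    hf.integral_hasStrictDerivAt 0 x |>.hasDerivAt
  have := integral_mul_deriv_eq_deriv_mul (a := 0) (b := a) (fun x _ => hprim x)
    (fun x _ => hasDerivAt_id x) (hf.intervalIntegrable _ _) intervalIntegrable_const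
  simp only [mul_one, id, integral_same, zero_mul, sub_zero] at this
  rw [this, mul_comm a]
  exact congrArg _ (integral_congr fun x _ => mul_comm _ _)

theorem integral_integral_abs_sub_of_antitoneOn (hf : Continuous f)
    (hanti : AntitoneOn f (Set.Icc 0 a)) (ha : 0 ≤ a) :
    ∫ x in 0..a, ∫ t in 0..a, |f x - f t| = 2 * ∫ x in 0..a, (a - 2 * x) * f x := by
  have hprim : Continuous fun x => ∫ t in 0..x, f t :=
    continuous_primitive (fun b c => hf.intervalIntegrable b c) 0
  have hweight : ∫ x in 0..a, (a - 2 * x) * f x =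
      a * (∫ x in 0..a, f x) - 2 * ∫ x in 0..a, x * f x := by
    simp only [sub_mul, mul_assoc]
    rw [integral_sub (Continuous.intervalIntegrable (by fun_prop) _ _)
        (Continuous.intervalIntegrable (by fun_prop) _ _),
      intervalIntegral.integral_const_mul, intervalIntegral.integral_const_mul]
  rw [integral_congr fun x hx => integral_abs_sub_of_antitoneOn hf hanti
      (by rwa [Set.uIcc_of_le ha] at hx),
    integral_sub (Continuous.intervalIntegrable (by fun_prop) _ _) intervalIntegrable_const,
    integral_add (Continuous.intervalIntegrable (by fun_prop) _ _)
      (Continuous.intervalIntegrable (by fun_prop) _ _),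
    intervalIntegral.integral_const_mul, integral_integral_eq_mul_sub_integral_mul hf,
    intervalIntegral.integral_const, smul_eq_mul, hweight]
  ring

theorem integral_integral_abs_sub_of_symm_of_antitoneOn (hf : Continuous f)
    (hsymm : ∀ x, f (2 * a - x) = f x) (hanti : AntitoneOn f (Set.Icc 0 a)) (ha : 0 ≤ a) :
    ∫ x in 0..2 * a, ∫ t in 0..2 * a, |f x - f t| = 8 * ∫ x in 0..a, (a - 2 * x) * f x := by
  have hinner (x : ℝ) : ∫ t in 0..2 * a, |f x - f t| = 2 * ∫ t in 0..a, |f x - f t| :=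
    integral_zero_two_mul_eq_two_mul_of_symm
      ((by fun_prop : Continuous fun t => |f x - f t|).intervalIntegrable _ _)
      fun t => by rw [hsymm]
  simp only [hinner]
  rw [integral_zero_two_mul_eq_two_mul_of_symm
      ((by fun_prop : Continuous fun x => 2 * ∫ t in 0..a, |f x - f t|).intervalIntegrable _ _)
      fun x => by rw [hsymm], intervalIntegral.integral_const_mul,
    integral_integral_abs_sub_of_antitoneOn hf hanti ha]
  ring

end Antitone

theorem Real.cos_pow_eq_sum (n : ℕ) (x : ℝ) :
    cos x ^ n = 2⁻¹ ^ n * ∑ m ∈ range (n + 1), (n.choose m : ℝ) * cos (((n : ℝ) - 2 * m) * x) := by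
  have hcomplex : ((2 * cos x) ^ n : ℝ) = ((2 * Complex.cos x) ^ n : ℂ) := by push_cast; rfl
  have hexp : (2 * Complex.cos x) ^ n = ∑ m ∈ range (n + 1),
      (n.choose m : ℂ) * Complex.exp ((((n : ℝ) - 2 * m) * x : ℝ) * Complex.I) := by
    rw [Complex.two_cos, add_comm, add_pow]
    refine sum_congr rfl fun m hm => ?_
    have hmn : m ≤ n := Nat.lt_succ_iff.mp (mem_range.mp hm)
    rw [← Complex.exp_nat_mul, ← Complex.exp_nat_mul, ← Complex.exp_add, mul_comm]
    congr 2
    push_cast [hmn]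
    ring
  have hre := congrArg Complex.re hexp
  rw [← hcomplex, Complex.ofReal_re, Complex.re_sum] at hre
  simp only [← Complex.ofReal_natCast, Complex.re_ofReal_mul, Complex.exp_ofReal_mul_I_re] at hre
  rw [← hre, mul_pow, ← mul_assoc, ← mul_pow, inv_mul_cancel₀ two_ne_zero, one_pow, one_mul]

-- At `c = 0` both sides vanish, the right-hand side through `x / 0 = 0`.
theorem integral_sub_two_mul_mul_cos (a c : ℝ) :
    ∫ x in 0..a, (a - 2 * x) * cos (c * x) =
      2 * (1 - cos (c * a)) / c ^ 2 - a * sin (c * a) / c := by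
  rcases eq_or_ne c 0 with rfl | hc
  · simp only [zero_mul, cos_zero, mul_one, sin_zero, sub_self, div_zero]
    rw [intervalIntegral.integral_sub intervalIntegrable_const
        ((continuous_const_mul 2).intervalIntegrable _ _), intervalIntegral.integral_const,
      intervalIntegral.integral_const_mul, integral_id, smul_eq_mul]
    ring
  have hderiv : ∀ x ∈ Set.uIcc 0 a, HasDerivAt
      (fun x => (a - 2 * x) * sin (c * x) / c - 2 * cos (c * x) / c ^ 2)
      ((a - 2 * x) * cos (c * x)) x := fun x _ => by
    have hcx : HasDerivAt (fun x => c * x) c x := by simpa using (hasDerivAt_id x).const_mul c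
    have := ((((hasDerivAt_id' x).const_mul 2).const_sub a).fun_mul hcx.sin).div_const c
      |>.fun_sub ((hcx.cos.const_mul 2).div_const (c ^ 2))
    refine this.congr_deriv ?_
    field_simp
    ring
  rw [integral_eq_sub_of_hasDerivAt hderiv
    ((by fun_prop : Continuous fun x => (a - 2 * x) * cos (c * x)).intervalIntegrable _ _)]
  simp only [mul_zero, sin_zero, cos_zero]
  field_simp
  ring

theorem Finset.sum_range_two_mul_add_one_eq_sum_odd {M : Type*} [AddCommMonoid M] {g : ℕ → M}
    (hg : ∀ m, Even m → g m = 0) (t : ℕ) :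
    ∑ m ∈ range (2 * t + 1), g m = ∑ j ∈ range t, g (2 * j + 1) := by
  induction t with
  | zero => simp [hg 0 ⟨0, rfl⟩]
  | succ t ih =>
    rw [show 2 * (t + 1) + 1 = 2 * t + 1 + 1 + 1 by ring, sum_range_succ _ (2 * t + 1 + 1),
      sum_range_succ _ (2 * t + 1), ih, sum_range_succ (fun j => g (2 * j + 1)) t,
      hg (2 * t + 1 + 1) ⟨t + 1, by ring⟩, add_zero]

theorem Finset.sum_range_two_mul_of_symm {M : Type*} [AddCommMonoid M] {b : ℕ → M} {s : ℕ}
    (hb : ∀ j < s, b (2 * s - 1 - j) = b j) :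
    ∑ j ∈ range (2 * s), b j = 2 • ∑ j ∈ range s, b j := by
  rw [two_mul, sum_range_add, two_nsmul, ← sum_range_reflect]
  congr 1
  refine sum_congr rfl fun j hj => ?_
  rw [← hb (s - 1 - j) (by have := mem_range.1 hj; omega)]
  congr 1
  have := mem_range.1 hj
  omega

theorem integral_pi_div_two_sub_two_mul_mul_cos_sub_two_mul {n : ℕ} (hn : 4 ∣ n) (m : ℕ) :
    ∫ x in 0..π / 2, (π / 2 - 2 * x) * cos (((n : ℝ) - 2 * m) * x) =
      if Odd m then 1 / ((n : ℝ) / 2 - m) ^ 2 else 0 := by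
  obtain ⟨q, rfl⟩ := hn
  have hangle : ((↑(4 * q) : ℝ) - 2 * m) * (π / 2) = ((2 * q - m : ℤ) : ℝ) * π := by
    push_cast; ring
  rw [integral_sub_two_mul_mul_cos, hangle, sin_int_mul_pi, cos_int_mul_pi, mul_zero, zero_div,
    sub_zero]
  split_ifs with hm
  · obtain ⟨r, rfl⟩ := hm
    have hodd : Odd (2 * (q : ℤ) - ↑(2 * r + 1)) := ⟨q - r - 1, by push_cast; ring⟩
    rw [hodd.neg_one_zpow, show ((↑(4 * q) : ℝ) / 2 - ↑(2 * r + 1)) = ((↑(4 * q) : ℝ) - 2 * ↑(2 * r + 1)) / 2 by ring,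
      div_pow, one_div_div]
    ring
  · obtain ⟨r, rfl⟩ := Nat.not_odd_iff_even.1 hm
    have heven : Even (2 * (q : ℤ) - ↑(r + r)) := ⟨q - r, by push_cast; ring⟩
    rw [heven.neg_one_zpow]
    simp

theorem integral_pi_div_two_sub_two_mul_mul_cos_pow {n : ℕ} (hn : 4 ∣ n) :
    ∫ x in 0..π / 2, (π / 2 - 2 * x) * cos x ^ n =
      2 / 2 ^ n * ∑ j ∈ range (n / 4),
        (n.choose (2 * j + 1) : ℝ) / ((n : ℝ) / 2 - (2 * (j : ℝ) + 1)) ^ 2 := by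
  have hexpand (x : ℝ) : (π / 2 - 2 * x) * cos x ^ n = 2⁻¹ ^ n * ∑ m ∈ range (n + 1),
      (n.choose m : ℝ) * ((π / 2 - 2 * x) * cos (((n : ℝ) - 2 * m) * x)) := by
    rw [cos_pow_eq_sum, mul_left_comm, mul_sum]
    simp only [mul_left_comm]
  simp only [hexpand, intervalIntegral.integral_const_mul]
  rw [integral_finsetSum fun m _ => (by fun_prop : Continuous _).intervalIntegrable _ _]
  simp only [intervalIntegral.integral_const_mul,
    integral_pi_div_two_sub_two_mul_mul_cos_sub_two_mul hn, mul_ite, mul_zero]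
  obtain ⟨q, rfl⟩ := hn
  rw [show 4 * q + 1 = 2 * (2 * q) + 1 by ring,
    sum_range_two_mul_add_one_eq_sum_odd fun m hm => if_neg (Nat.not_odd_iff_even.2 hm),
    sum_range_two_mul_of_symm, Nat.mul_div_cancel_left q four_pos, nsmul_eq_mul, inv_pow]
  · simp only [odd_two_mul_add_one, if_true, mul_one_div, Nat.cast_add, Nat.cast_mul, Nat.cast_one,
      Nat.cast_ofNat]
    ring
  · intro j hj
    have hle : 2 * j + 1 ≤ 4 * q := by omega
    rw [show 2 * (2 * q - 1 - j) + 1 = 4 * q - (2 * j + 1) by omega, Nat.choose_symm hle,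
      Nat.cast_sub hle, if_pos ⟨2 * q - j - 1, by omega⟩, if_pos (odd_two_mul_add_one j)]
    push_cast
    ring

theorem Real.lipschitzWith_cos_pow (n : ℕ) : LipschitzWith n fun x => cos x ^ n := by
  refine LipschitzWith.of_dist_le_mul fun x y => ?_
  rw [Real.dist_eq, Real.dist_eq, NNReal.coe_natCast]
  calc |cos x ^ n - cos y ^ n| ≤ |cos x - cos y| * n * max |cos x| |cos y| ^ (n - 1) :=
        abs_pow_sub_pow_le _ _ _
    _ ≤ |x - y| * n * 1 := by
        gcongr ?_ * _ * ?_
        · exact abs_cos_sub_cos_le x y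
        · exact pow_le_one₀ (le_max_of_le_left (abs_nonneg _))
            (max_le (abs_cos_le_one x) (abs_cos_le_one y))
    _ = n * |x - y| := by ring

theorem Even.cos_pi_sub_pow {n : ℕ} (hn : Even n) (x : ℝ) : cos (π - x) ^ n = cos x ^ n := by
  rw [cos_pi_sub, hn.neg_pow]

theorem Even.periodic_cos_pow {n : ℕ} (hn : Even n) : Periodic (fun x => cos x ^ n) π :=
  fun x => by simp only [cos_add_pi, hn.neg_pow]

theorem Real.antitoneOn_cos_pow (n : ℕ) : AntitoneOn (fun x => cos x ^ n) (Set.Icc 0 (π / 2)) :=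
  fun x hx y hy hxy => pow_le_pow_left₀ (cos_nonneg_of_mem_Icc ⟨by linarith [pi_pos, hy.1], hy.2⟩)
    (cos_le_cos_of_nonneg_of_le_pi hx.1 (by linarith [hy.2, pi_pos]) hxy) n

theorem area_even_power_zero_mod_four (n : ℕ) (hpos : 0 < n) (hmod : n % 4 = 0) :
    Tendsto (fun k : ℕ => ∫ x in (0:ℝ)..π, |Real.cos x ^ n - Real.cos (k * x) ^ n|)
      atTop
      (𝓝 (16 / (2 ^ n * π) *
        ∑ j ∈ Finset.range ((n - 4) / 4 + 1),
          (n.choose (2 * j + 1) : ℝ) / ((n : ℝ) / 2 - (2 * (j : ℝ) + 1)) ^ 2)) := by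
  have hdvd : 4 ∣ n := Nat.dvd_of_mod_eq_zero hmod
  have heven : Even n := Nat.even_iff.2 (by omega)
  have hmean := integral_integral_abs_sub_of_symm_of_antitoneOn (by fun_prop)
    (fun x => by rw [show 2 * (π / 2) = π by ring, heven.cos_pi_sub_pow]) (antitoneOn_cos_pow n)
    (by positivity)
  rw [show 2 * (π / 2) = π by ring, integral_pi_div_two_sub_two_mul_mul_cos_pow hdvd] at hmean
  rw [show (n - 4) / 4 + 1 = n / 4 by omega]
  convert (lipschitzWith_cos_pow n).tendsto_integral_abs_sub_comp_mul heven.periodic_cos_pow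
    pi_pos using 2
  rw [hmean]
  ring
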